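/- arXiv:2203.07299 — 2 statements merged into one kernel-verified Lean document; each statement's English description precedes it below -/
import Mathlib

section
/- Let 1 < p < ∞, let X ⊆ ℓ_p be a closed linear subspace with dim X = ∞, and let 0 < δ < 1. Then there exist a sequence of indices 0 = n_0 < n_1 < n_2 < … and elements u_k ∈ X (k ≥ 1) with u_k(j) = 0 for all j ≤ n_{k−1}, such that, setting v_k := P_{n_k}(u_k), w_k := R_{n_k}(u_k), I_k := {n_{k−1}+1, …, n_k} and b_k := min{|v_k(j)| : j ∈ I_k, v_k(j) ≠ 0}, the following hold for all k ≥ 1: (1) ‖u_k‖_p = 1; (2) 2n_{k−1} < n_k; (3) supp v_k ⊆ I_k; (4) |v_{k+1}(j)| ≤ min{b_k, (n_k − n_{k−1})^{−1/p}} for all j; (5) (n_{k+1} − n_k)^{−1/p} ≤ b_k; (6) 1 − δ ≤ ‖v_k‖_p ≤ 1; (7) ‖w_k‖_p ≤ δ/2^k. -/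
open scoped ENNReal

/-- The `ℓ_p` (quasi)norm of a sequence, `‖f‖_p = (∑ |f j|^p)^{1/p}`. -/
noncomputable def lpNorm (p : ℝ) (f : ℕ → ℝ) : ℝ :=
  (∑' j : ℕ, |f j| ^ p) ^ (1 / p)

/-- `P_m f` keeps the first `m` coordinates of `f` and sets the rest to zero. -/
def Pproj (m : ℕ) (f : ℕ → ℝ) : ℕ → ℝ := fun j => if j < m then f j else 0

/-- `R_m f` sets the first `m` coordinates of `f` to zero (the tail of `f`). -/
def Rproj (m : ℕ) (f : ℕ → ℝ) : ℕ → ℝ := fun j => if j < m then 0 else f j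

/-- `minNonzeroOn a s` is the minimum of `|a j|` over those `j ∈ s` with
`a j ≠ 0` (as an infimum of the corresponding set of reals). -/
noncomputable def minNonzeroOn (a : ℕ → ℝ) (s : Set ℕ) : ℝ :=
  sInf {r : ℝ | ∃ j ∈ s, a j ≠ 0 ∧ r = |a j|}

/-!
Everything rests on one lemma: an infinite-dimensional subspace `X ⊆ ℓ_p` contains, for every
`m` and `ε > 0`, a unit vector vanishing on the first `m` coordinates all of whose coordinates are
at most `ε`. Since finitely many coordinates form a finite-rank map on `X`, `X` contains unit
vectors vanishing on any initial segment; cutting off small tails yields a gliding hump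
`y₀, y₁, …` of unit vectors essentially supported on consecutive blocks. A sum of `N` of them has coordinates at most
`3/2`, while each block carries at least `1/2` of it, so its norm is at least `N^{1/p} / 2`:
normalizing gives an `ε`-flat unit vector as soon as `N ≥ (3/ε)^p`.

The construction then takes `u_{k+1}` flat below `min (b_k, (n_k - n_{k-1})^{-1/p})` and vanishing
below `n_k`, and `n_{k+1}` so large that `(n_{k+1} - n_k)^{-1/p} ≤ b_k` and the tail of `u_{k+1}`
beyond `n_{k+1}` has norm at most `δ / 2^{k+1}`; then `‖v_{k+1}‖ ≥ 1 - δ` by the triangle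
inequality, so `v_{k+1} ≠ 0` and `b_{k+1} > 0`, which keeps the recursion going.
-/

open Filter Topology Finset Function

namespace lp

variable {α E : Type*} [NormedAddCommGroup E] {p : ℝ≥0∞}

noncomputable def indicator (s : Set α) : lp (fun _ : α => E) p →+ lp (fun _ : α => E) p where
  toFun f := ⟨s.indicator f, (lp.memℓp f).mono' fun _ => norm_indicator_le_norm_self _ _⟩
  map_zero' := Subtype.ext (Set.indicator_zero' E)
  map_add' f g := Subtype.ext (Set.indicator_add' s f g)

@[simp]
theorem coeFn_indicator (s : Set α) (f : lp (fun _ : α => E) p) :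
    ⇑(indicator s f) = s.indicator ⇑f := rfl

theorem indicator_add_indicator_compl (s : Set α) (f : lp (fun _ : α => E) p) :
    indicator s f + indicator sᶜ f = f :=
  Subtype.ext (Set.indicator_self_add_compl s f)

theorem norm_indicator_rpow (hp : 0 < p.toReal) (s : Finset α) (f : lp (fun _ : α => E) p) :
    ‖indicator ↑s f‖ ^ p.toReal = ∑ i ∈ s, ‖f i‖ ^ p.toReal := by
  rw [lp.norm_rpow_eq_tsum hp, tsum_eq_sum (s := s)]
  · exact Finset.sum_congr rfl fun i hi => by simp [hi]
  · intro i hi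
    simp [hi, Real.zero_rpow hp.ne']

theorem sum_norm_indicator_rpow_le {ι : Type*} (hp : 0 < p.toReal) (B : ι → Finset α)
    (hB : Pairwise (Disjoint on B)) (T : Finset ι) (f : lp (fun _ : α => E) p) :
    ∑ k ∈ T, ‖indicator ↑(B k) f‖ ^ p.toReal ≤ ‖f‖ ^ p.toReal := by
  classical
  simp only [norm_indicator_rpow hp]
  rw [← Finset.sum_biUnion (hB.set_pairwise _)]
  exact lp.sum_rpow_le_norm_rpow hp f _

variable [Fact (1 ≤ p)]

theorem norm_indicator_le (s : Set α) (f : lp (fun _ : α => E) p) : ‖indicator s f‖ ≤ ‖f‖ :=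
  lp.norm_mono (zero_lt_one.trans_le Fact.out).ne' fun _ => norm_indicator_le_norm_self _ _

theorem tendsto_norm_indicator_Ici (hp : p ≠ ∞) (f : lp (fun _ : ℕ => E) p) :
    Tendsto (fun n => ‖indicator (Set.Ici n) f‖) atTop (𝓝 0) := by
  have heq (n : ℕ) : indicator (Set.Ici n) f = f - ∑ i ∈ range n, lp.single p i (f i) := by
    ext j
    rw [coeFn_sub, lp.coeFn_sum, Pi.sub_apply, Finset.sum_apply]
    by_cases hj : j < n <;> simp [lp.single_apply, Pi.single_apply, hj]
  simpa only [heq, ← dist_eq_norm'] using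
    tendsto_iff_dist_tendsto_zero.mp (lp.hasSum_single hp f).tendsto_sum_nat

theorem exists_norm_indicator_Ici_le (hp : p ≠ ∞) (f : lp (fun _ : ℕ => E) p) {η : ℝ}
    (hη : 0 < η) (N : ℕ) : ∃ n, N < n ∧ ‖indicator (Set.Ici n) f‖ ≤ η :=
  ((((tendsto_norm_indicator_Ici hp f).eventually (ge_mem_nhds hη)).and
    (eventually_gt_atTop N)).exists).imp fun _ h => ⟨h.2, h.1⟩

end lp

section GlidingHump

variable {E : Type*} [NormedAddCommGroup E] {p : ℝ≥0∞}

structure IsGlidingHump (ms : ℕ → ℕ) (y : ℕ → lp (fun _ : ℕ => E) p) (η : ℝ) : Prop where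
  strictMono : StrictMono ms
  norm_eq_one : ∀ k, ‖y k‖ = 1
  apply_eq_zero : ∀ k, ∀ j < ms k, y k j = 0
  norm_tail_le : ∀ k, ‖lp.indicator (Set.Ici (ms (k + 1))) (y k)‖ ≤ η

namespace IsGlidingHump

variable {ms : ℕ → ℕ} {y : ℕ → lp (fun _ : ℕ => E) p} {η : ℝ}

theorem pairwise_disjoint (h : IsGlidingHump ms y η) :
    Pairwise (Disjoint on fun k => Set.Ico (ms k) (ms (k + 1))) :=
  h.strictMono.monotone.pairwise_disjoint_on_Ico_succ

theorem apply_eq_indicator_Ici (h : IsGlidingHump ms y η) {k j : ℕ}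
    (hj : j ∉ Set.Ico (ms k) (ms (k + 1))) :
    y k j = (Set.Ici (ms (k + 1))).indicator (y k) j := by
  rw [Set.mem_Ico, not_and_or, not_le, not_lt] at hj
  rcases hj with hj | hj
  · rw [h.apply_eq_zero k j hj, Set.indicator_of_notMem]
    rw [Set.mem_Ici, not_le]
    exact hj.trans (h.strictMono k.lt_succ_self)
  · exact (Set.indicator_of_mem (Set.mem_Ici.mpr hj) _).symm

theorem sum_apply_eq_zero (h : IsGlidingHump ms y η) (T : Finset ℕ) {j : ℕ} (hj : j < ms 0) :
    (∑ k ∈ T, y k) j = 0 := by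
  rw [lp.coeFn_sum, Finset.sum_apply]
  exact sum_eq_zero fun k _ => h.apply_eq_zero k j (hj.trans_le (h.strictMono.monotone k.zero_le))

theorem indicator_compl_eq (h : IsGlidingHump ms y η) (k : ℕ) :
    lp.indicator (Set.Ico (ms k) (ms (k + 1)))ᶜ (y k) =
      lp.indicator (Set.Ici (ms (k + 1))) (y k) := by
  ext j
  by_cases hj : j ∈ Set.Ico (ms k) (ms (k + 1))
  · simp [hj, hj.2]
  · simp only [lp.coeFn_indicator, Set.indicator_of_mem (Set.mem_compl hj)]
    exact h.apply_eq_indicator_Ici hj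

variable [Fact (1 ≤ p)]

theorem nonneg (h : IsGlidingHump ms y η) : 0 ≤ η :=
  (norm_nonneg _).trans (h.norm_tail_le 0)

theorem norm_apply_le (h : IsGlidingHump ms y η) {k j : ℕ}
    (hj : j ∉ Set.Ico (ms k) (ms (k + 1))) : ‖y k j‖ ≤ η := by
  rw [h.apply_eq_indicator_Ici hj]
  exact (lp.norm_apply_le_norm (zero_lt_one.trans_le Fact.out).ne'
    (lp.indicator (Set.Ici (ms (k + 1))) (y k)) j).trans (h.norm_tail_le k)

theorem one_sub_le_norm_indicator_self (h : IsGlidingHump ms y η) (k : ℕ) :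
    1 - η ≤ ‖lp.indicator (Set.Ico (ms k) (ms (k + 1))) (y k)‖ := by
  have := norm_add_le (lp.indicator (Set.Ico (ms k) (ms (k + 1))) (y k))
    (lp.indicator (Set.Ico (ms k) (ms (k + 1)))ᶜ (y k))
  rw [lp.indicator_add_indicator_compl, h.norm_eq_one, h.indicator_compl_eq] at this
  linarith [h.norm_tail_le k]

theorem norm_indicator_le_of_ne (h : IsGlidingHump ms y η) {k l : ℕ} (hlk : l ≠ k) :
    ‖lp.indicator (Set.Ico (ms k) (ms (k + 1))) (y l)‖ ≤ η := by
  have : lp.indicator (Set.Ico (ms k) (ms (k + 1))) (y l) =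
      lp.indicator (Set.Ico (ms k) (ms (k + 1))) (lp.indicator (Set.Ici (ms (l + 1))) (y l)) := by
    ext j
    by_cases hj : j ∈ Set.Ico (ms k) (ms (k + 1))
    · simp only [lp.coeFn_indicator, Set.indicator_of_mem hj]
      exact h.apply_eq_indicator_Ici (Set.disjoint_left.mp (h.pairwise_disjoint hlk.symm) hj)
    · simp [hj]
  rw [this]
  exact (lp.norm_indicator_le _ _).trans (h.norm_tail_le l)

theorem norm_sum_apply_le (h : IsGlidingHump ms y η) (N j : ℕ) :
    ‖(∑ k ∈ range N, y k) j‖ ≤ 1 + N * η := by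
  classical
  have hterm (k : ℕ) : ‖y k j‖ ≤ if j ∈ Set.Ico (ms k) (ms (k + 1)) then 1 else η := by
    split_ifs with hj
    · exact (lp.norm_apply_le_norm (zero_lt_one.trans_le Fact.out).ne' (y k) j).trans
        (h.norm_eq_one k).le
    · exact h.norm_apply_le hj
  have hcard : #{k ∈ range N | j ∈ Set.Ico (ms k) (ms (k + 1))} ≤ 1 :=
    card_le_one.mpr fun a ha b hb => h.pairwise_disjoint.eq <|
      Set.not_disjoint_iff.mpr ⟨j, (mem_filter.mp ha).2, (mem_filter.mp hb).2⟩
  calc ‖(∑ k ∈ range N, y k) j‖ = ‖∑ k ∈ range N, y k j‖ := by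
        rw [lp.coeFn_sum, Finset.sum_apply]
    _ ≤ ∑ k ∈ range N, ‖y k j‖ := norm_sum_le _ _
    _ ≤ ∑ k ∈ range N, if j ∈ Set.Ico (ms k) (ms (k + 1)) then 1 else η :=
        sum_le_sum fun k _ => hterm k
    _ = #{k ∈ range N | j ∈ Set.Ico (ms k) (ms (k + 1))} +
          #{k ∈ range N | j ∉ Set.Ico (ms k) (ms (k + 1))} * η := by
        rw [sum_ite, sum_const, sum_const, nsmul_eq_mul, nsmul_eq_mul, mul_one]
    _ ≤ 1 + N * η := by
        gcongr
        · exact_mod_cast hcard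
        · exact h.nonneg
        · exact_mod_cast (card_filter_le _ _).trans (card_range N).le

theorem one_sub_le_norm_indicator_sum (h : IsGlidingHump ms y η) {N k : ℕ} (hk : k < N) :
    1 - (N + 1) * η ≤ ‖lp.indicator (Set.Ico (ms k) (ms (k + 1))) (∑ l ∈ range N, y l)‖ := by
  set B := Set.Ico (ms k) (ms (k + 1))
  have hrest : ‖∑ l ∈ (range N).erase k, lp.indicator B (y l)‖ ≤ N * η :=
    calc _ ≤ ∑ l ∈ (range N).erase k, ‖lp.indicator B (y l)‖ := norm_sum_le _ _
      _ ≤ ∑ l ∈ (range N).erase k, η :=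
          sum_le_sum fun l hl => h.norm_indicator_le_of_ne (ne_of_mem_erase hl)
      _ ≤ ∑ l ∈ range N, η :=
          sum_le_sum_of_subset_of_nonneg (erase_subset _ _) fun _ _ _ => h.nonneg
      _ = N * η := by simp
  have := norm_sub_le (lp.indicator B (y k) + ∑ l ∈ (range N).erase k, lp.indicator B (y l))
    (∑ l ∈ (range N).erase k, lp.indicator B (y l))
  rw [add_sub_cancel_right,
    add_sum_erase (range N) (fun l => lp.indicator B (y l)) (mem_range.mpr hk), ← map_sum] at this
  linarith [h.one_sub_le_norm_indicator_self k]

theorem rpow_le_norm_sum_rpow (h : IsGlidingHump ms y η) (hp : 0 < p.toReal) {N : ℕ}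
    (hη : (N + 1) * η ≤ 1) :
    N * (1 - (N + 1) * η) ^ p.toReal ≤ ‖∑ k ∈ range N, y k‖ ^ p.toReal :=
  calc (N : ℝ) * (1 - (N + 1) * η) ^ p.toReal = ∑ k ∈ range N, (1 - (N + 1) * η) ^ p.toReal := by
        simp
    _ ≤ ∑ k ∈ range N,
          ‖lp.indicator (Set.Ico (ms k) (ms (k + 1))) (∑ l ∈ range N, y l)‖ ^ p.toReal :=
        sum_le_sum fun k hk => Real.rpow_le_rpow (by linarith)
          (h.one_sub_le_norm_indicator_sum (mem_range.mp hk)) hp.le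
    _ ≤ ‖∑ k ∈ range N, y k‖ ^ p.toReal := by
        simpa only [Finset.coe_Ico] using lp.sum_norm_indicator_rpow_le hp
          (fun k => Finset.Ico (ms k) (ms (k + 1)))
          (fun a b hab => by
            simpa only [onFun, ← Finset.disjoint_coe, Finset.coe_Ico] using h.pairwise_disjoint hab)
          (range N) (∑ l ∈ range N, y l)

theorem rpow_half_le_norm_sum_rpow {N : ℕ} (h : IsGlidingHump ms y (1 / (2 * (N + 1))))
    (hp : 0 < p.toReal) : N * (1 / 2) ^ p.toReal ≤ ‖∑ k ∈ range N, y k‖ ^ p.toReal := by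
  have hNη : (N + 1) * (1 / (2 * (N + 1))) = (1 / 2 : ℝ) := by field_simp
  have := h.rpow_le_norm_sum_rpow hp (by rw [hNη]; norm_num)
  rwa [hNη, show (1 : ℝ) - 1 / 2 = 1 / 2 by norm_num] at this

theorem norm_sum_pos {N : ℕ} (h : IsGlidingHump ms y (1 / (2 * (N + 1)))) (hp : 0 < p.toReal)
    (hN : 0 < N) : 0 < ‖∑ k ∈ range N, y k‖ := by
  refine (norm_nonneg _).lt_of_ne fun h0 => ?_
  have := h.rpow_half_le_norm_sum_rpow hp
  rw [← h0, Real.zero_rpow hp.ne'] at this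
  exact (mul_pos (Nat.cast_pos.mpr hN) (by positivity)).not_ge this

theorem norm_sum_apply_le_mul_norm {N : ℕ} (h : IsGlidingHump ms y (1 / (2 * (N + 1))))
    (hp : 0 < p.toReal) {ε : ℝ} (hε : 0 < ε) (hN : (3 / ε) ^ p.toReal ≤ N) (j : ℕ) :
    ‖(∑ k ∈ range N, y k) j‖ ≤ ε * ‖∑ k ∈ range N, y k‖ := by
  set q := p.toReal
  set S := ∑ k ∈ range N, y k
  have hSj : ‖S j‖ ≤ 3 / 2 := by
    have : (N : ℝ) * (1 / (2 * (N + 1))) ≤ 1 / 2 := by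
      rw [mul_one_div, div_le_iff₀ (by positivity)]
      linarith
    linarith [h.norm_sum_apply_le N j]
  rw [← Real.rpow_le_rpow_iff (norm_nonneg _) (by positivity) hp]
  calc ‖S j‖ ^ q ≤ (3 / 2) ^ q := Real.rpow_le_rpow (norm_nonneg _) hSj hp.le
    _ = ε ^ q * ((3 / ε) ^ q * (1 / 2) ^ q) := by
        rw [← Real.mul_rpow (by positivity) (by positivity),
          ← Real.mul_rpow hε.le (by positivity)]
        field_simp
    _ ≤ ε ^ q * ‖S‖ ^ q := by
        gcongr
        exact (mul_le_mul_of_nonneg_right hN (by positivity)).trans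
          (h.rpow_half_le_norm_sum_rpow hp)
    _ = (ε * ‖S‖) ^ q := (Real.mul_rpow hε.le (norm_nonneg _)).symm

end IsGlidingHump

end GlidingHump

section FlatVectors

variable {p : ℝ≥0∞} [Fact (1 ≤ p)] {X : Submodule ℝ (lp (fun _ : ℕ => ℝ) p)}

theorem exists_mem_norm_eq_one_forall_lt_eq_zero (hX : ¬ FiniteDimensional ℝ X) (m : ℕ) :
    ∃ u ∈ X, ‖u‖ = 1 ∧ ∀ j < m, u j = 0 := by
  let φ : X →ₗ[ℝ] (Fin m → ℝ) :=
    (LinearMap.pi fun i : Fin m => lp.evalₗ (𝕜 := ℝ) _ p (i : ℕ)) ∘ₗ X.subtype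
  obtain ⟨x, hxφ, hx0⟩ : ∃ x ∈ LinearMap.ker φ, x ≠ 0 :=
    Submodule.exists_mem_ne_zero_of_ne_bot fun h =>
      hX (.of_injective φ (LinearMap.ker_eq_bot.mp h))
  have hx : (x : lp (fun _ : ℕ => ℝ) p) ≠ 0 := by simpa using hx0
  refine ⟨(‖(x : lp (fun _ : ℕ => ℝ) p)‖⁻¹ : ℝ) • x, X.smul_mem _ x.2, norm_smul_inv_norm hx,
    fun j hj => ?_⟩
  have : (x : lp (fun _ : ℕ => ℝ) p) j = 0 := congrFun hxφ ⟨j, hj⟩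
  simp [this]

theorem exists_isGlidingHump_of_not_finiteDimensional (hp : p ≠ ∞)
    (hX : ¬ FiniteDimensional ℝ X) (m : ℕ) {η : ℝ} (hη : 0 < η) :
    ∃ (ms : ℕ → ℕ) (y : ℕ → lp (fun _ : ℕ => ℝ) p),
      IsGlidingHump ms y η ∧ ms 0 = m ∧ ∀ k, y k ∈ X := by
  have step (a : ℕ) : ∃ (v : lp (fun _ : ℕ => ℝ) p) (n : ℕ),
      (v ∈ X ∧ ‖v‖ = 1 ∧ ∀ j < a, v j = 0) ∧ a < n ∧ ‖lp.indicator (Set.Ici n) v‖ ≤ η := by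
    obtain ⟨v, hvX, hv1, hv0⟩ := exists_mem_norm_eq_one_forall_lt_eq_zero hX a
    obtain ⟨n, han, hn⟩ := lp.exists_norm_indicator_Ici_le hp v hη a
    exact ⟨v, n, ⟨hvX, hv1, hv0⟩, han, hn⟩
  choose v next hv hnext htail using step
  refine ⟨fun k => next^[k] m, fun k => v (next^[k] m),
    ⟨strictMono_nat_of_lt_succ fun k => ?_, fun k => (hv _).2.1, fun k => (hv _).2.2,
      fun k => ?_⟩, rfl, fun k => (hv _).1⟩
  · rw [Function.iterate_succ_apply']
    exact hnext _
  · simp only [Function.iterate_succ_apply']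
    exact htail _

theorem exists_mem_norm_eq_one_abs_apply_le (hp : p ≠ ∞) (hX : ¬ FiniteDimensional ℝ X)
    (m : ℕ) {ε : ℝ} (hε : 0 < ε) :
    ∃ u ∈ X, ‖u‖ = 1 ∧ (∀ j < m, u j = 0) ∧ ∀ j, |u j| ≤ ε := by
  set N := ⌈(3 / ε) ^ p.toReal⌉₊
  obtain ⟨ms, y, hy, rfl, hyX⟩ :=
    exists_isGlidingHump_of_not_finiteDimensional hp hX m (η := 1 / (2 * (N + 1))) (by positivity)
  set S := ∑ k ∈ range N, y k
  have hp' : 0 < p.toReal := ENNReal.toReal_pos (zero_lt_one.trans_le Fact.out).ne' hp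
  have hS := hy.norm_sum_pos hp' (Nat.ceil_pos.mpr (by positivity))
  refine ⟨‖S‖⁻¹ • S, X.smul_mem _ (sum_mem fun k _ => hyX k),
    norm_smul_inv_norm (norm_pos_iff.mp hS), fun j hj => ?_, fun j => ?_⟩
  · rw [lp.coeFn_smul, Pi.smul_apply, hy.sum_apply_eq_zero (range N) hj, smul_zero]
  · rw [lp.coeFn_smul, Pi.smul_apply, smul_eq_mul, abs_mul, abs_inv, abs_norm,
      inv_mul_le_iff₀ hS, mul_comm, ← Real.norm_eq_abs]
    exact hy.norm_sum_apply_le_mul_norm hp' hε (Nat.le_ceil _) j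

end FlatVectors

theorem Pproj_eq_indicator (m : ℕ) (f : ℕ → ℝ) : Pproj m f = (Set.Iio m).indicator f := by
  ext j
  simp [Pproj, Set.indicator_apply]

theorem Rproj_eq_indicator (m : ℕ) (f : ℕ → ℝ) : Rproj m f = (Set.Ici m).indicator f := by
  ext j
  by_cases hj : j < m <;> simp [Rproj, Set.indicator_apply, hj]

theorem abs_Pproj_apply_le (m : ℕ) (f : ℕ → ℝ) (j : ℕ) : |Pproj m f j| ≤ |f j| := by
  rw [Pproj_eq_indicator, ← Real.norm_eq_abs, ← Real.norm_eq_abs]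
  exact norm_indicator_le_norm_self _ _

theorem minNonzeroOn_pos {a : ℕ → ℝ} {s : Set ℕ} (hs : s.Finite) (h : ∃ j ∈ s, a j ≠ 0) :
    0 < minNonzeroOn a s := by
  obtain ⟨j, hj, hja⟩ := h
  set T := {r : ℝ | ∃ j ∈ s, a j ≠ 0 ∧ r = |a j|}
  have hfin : T.Finite :=
    (hs.image fun j => |a j|).subset fun _ ⟨i, hi, _, hr⟩ => ⟨i, hi, hr.symm⟩
  have hne : T.Nonempty := ⟨_, j, hj, hja, rfl⟩
  obtain ⟨i, -, hia, hr⟩ := hne.csInf_mem hfin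
  change 0 < sInf T
  rw [hr]
  exact abs_pos.mpr hia

theorem lpNorm_coeFn {p : ℝ} (hp : 0 < p) (f : lp (fun _ : ℕ => ℝ) (ENNReal.ofReal p)) :
    lpNorm p ⇑f = ‖f‖ := by
  rw [lp.norm_eq_tsum_rpow (by rwa [ENNReal.toReal_ofReal hp.le]) f, lpNorm,
    ENNReal.toReal_ofReal hp.le]
  simp [Real.norm_eq_abs]

theorem lpNorm_Pproj {p : ℝ} (hp : 0 < p) (f : lp (fun _ : ℕ => ℝ) (ENNReal.ofReal p)) (m : ℕ) :
    lpNorm p (Pproj m ⇑f) = ‖lp.indicator (Set.Iio m) f‖ := by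
  rw [Pproj_eq_indicator, ← lp.coeFn_indicator, lpNorm_coeFn hp]

theorem lpNorm_Rproj {p : ℝ} (hp : 0 < p) (f : lp (fun _ : ℕ => ℝ) (ENNReal.ofReal p)) (m : ℕ) :
    lpNorm p (Rproj m ⇑f) = ‖lp.indicator (Set.Ici m) f‖ := by
  rw [Rproj_eq_indicator, ← lp.coeFn_indicator, lpNorm_coeFn hp]

theorem one_div_rpow_le {b r x : ℝ} (hb : 0 < b) (hr : 0 < r) (hx : b⁻¹ ^ r⁻¹ ≤ x) :
    1 / x ^ r ≤ b := by
  have hb' : b⁻¹ ≤ x ^ r := by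
    rw [← Real.rpow_inv_rpow (inv_nonneg.mpr hb.le) hr.ne']
    gcongr
  simpa using one_div_le_one_div_of_le (by positivity) hb'

section Construction

variable {p : ℝ≥0∞} {X : Submodule ℝ (lp (fun _ : ℕ => ℝ) p)} {δ : ℝ}

/-- Stage `k` of the construction is the paper's step `k + 1`: `lower = n_k`, `upper = n_{k+1}`,
`u = u_{k+1}`, and `minCoeff` below is `b_{k+1}`. -/
structure ConstructionStage (X : Submodule ℝ (lp (fun _ : ℕ => ℝ) p)) (δ : ℝ) (k : ℕ) where
  lower : ℕ
  upper : ℕ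
  u : lp (fun _ : ℕ => ℝ) p
  mem : u ∈ X
  norm_eq_one : ‖u‖ = 1
  apply_eq_zero : ∀ j < lower, u j = 0
  two_mul_lower_lt : 2 * lower < upper
  norm_tail_le : ‖lp.indicator (Set.Ici upper) u‖ ≤ δ / 2 ^ (k + 1)

namespace ConstructionStage

variable {k : ℕ} (s : ConstructionStage X δ k)

noncomputable def minCoeff : ℝ :=
  minNonzeroOn (Pproj s.upper s.u) (Set.Ico s.lower s.upper)

theorem support_Pproj_subset :
    Function.support (Pproj s.upper s.u) ⊆ Set.Ico s.lower s.upper := by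
  intro j hj
  rw [Function.mem_support, Pproj] at hj
  split_ifs at hj with hjs
  · exact ⟨not_lt.mp fun hj' => hj (s.apply_eq_zero j hj'), hjs⟩
  · exact (hj rfl).elim

variable [Fact (1 ≤ p)]

theorem norm_head_le_one : ‖lp.indicator (Set.Iio s.upper) s.u‖ ≤ 1 :=
  s.norm_eq_one ▸ lp.norm_indicator_le _ _

theorem one_sub_le_norm_head : 1 - δ ≤ ‖lp.indicator (Set.Iio s.upper) s.u‖ := by
  have htail := s.norm_tail_le
  have hδ : 0 ≤ δ := by
    have h := (norm_nonneg _).trans htail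
    rwa [le_div_iff₀ (by positivity), zero_mul] at h
  have := norm_add_le (lp.indicator (Set.Iio s.upper) s.u) (lp.indicator (Set.Iio s.upper)ᶜ s.u)
  rw [lp.indicator_add_indicator_compl, Set.compl_Iio, s.norm_eq_one] at this
  linarith [div_le_self hδ (one_le_pow₀ (by norm_num : (1 : ℝ) ≤ 2) : (1 : ℝ) ≤ 2 ^ (k + 1))]

theorem minCoeff_pos (hδ : δ < 1) : 0 < s.minCoeff := by
  have hhead : lp.indicator (Set.Iio s.upper) s.u ≠ 0 :=
    norm_pos_iff.mp ((sub_pos.mpr hδ).trans_le s.one_sub_le_norm_head)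
  obtain ⟨j, hj⟩ : ∃ j, Pproj s.upper s.u j ≠ 0 := by
    by_contra! h
    exact hhead (lp.ext (by rw [lp.coeFn_indicator, ← Pproj_eq_indicator]; exact funext h))
  exact minNonzeroOn_pos (Set.finite_Ico _ _) ⟨j, s.support_Pproj_subset hj, hj⟩

end ConstructionStage

variable [Fact (1 ≤ p)]

theorem exists_constructionStage (hp : p ≠ ∞) (hX : ¬ FiniteDimensional ℝ X) (hδ : 0 < δ)
    (k n : ℕ) {β : ℝ} (hβ : 0 < β) (γ : ℕ) :
    ∃ s : ConstructionStage X δ k, s.lower = n ∧ (∀ j, |s.u j| ≤ β) ∧ γ < s.upper := by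
  obtain ⟨u, huX, hu1, hu0, huβ⟩ := exists_mem_norm_eq_one_abs_apply_le hp hX n hβ
  obtain ⟨m, hm, htail⟩ := lp.exists_norm_indicator_Ici_le hp u
    (by positivity : 0 < δ / 2 ^ (k + 1)) (max (2 * n) γ)
  exact ⟨⟨n, m, u, huX, hu1, hu0, (le_max_left _ _).trans_lt hm, htail⟩, rfl, huβ,
    (le_max_right _ _).trans_lt hm⟩

theorem ConstructionStage.exists_next (hp : p ≠ ∞) (hX : ¬ FiniteDimensional ℝ X) (hδ0 : 0 < δ)
    (hδ1 : δ < 1) {k : ℕ} (s : ConstructionStage X δ k) {r : ℝ} (hr : 0 < r) :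
    ∃ t : ConstructionStage X δ (k + 1), t.lower = s.upper ∧
      (∀ j, |t.u j| ≤ min s.minCoeff (1 / ((s.upper : ℝ) - s.lower) ^ r)) ∧
      1 / ((t.upper : ℝ) - s.upper) ^ r ≤ s.minCoeff := by
  have hb := s.minCoeff_pos hδ1
  have hlen : (0 : ℝ) < (s.upper : ℝ) - s.lower := by
    have := s.two_mul_lower_lt
    rw [sub_pos]
    exact_mod_cast (by omega : s.lower < s.upper)
  obtain ⟨t, ht, htβ, htγ⟩ := exists_constructionStage hp hX hδ0 (k + 1) s.upper
    (β := min s.minCoeff (1 / ((s.upper : ℝ) - s.lower) ^ r)) (lt_min hb (by positivity))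
    (s.upper + ⌈s.minCoeff⁻¹ ^ r⁻¹⌉₊)
  refine ⟨t, ht, htβ, one_div_rpow_le hb hr ((Nat.le_ceil _).trans ?_)⟩
  rw [le_sub_iff_add_le']
  exact_mod_cast htγ.le

end Construction

/-- Here `i + 1` plays the role of `k ≥ 1`, and `I_k` is the 0-indexed `[n_{k-1}, n_k)`. -/
theorem exists_main_inductive_construction_general (p : ℝ) (hp : 1 < p)
    [Fact (1 ≤ ENNReal.ofReal p)]
    (X : Submodule ℝ (lp (fun _ : ℕ => ℝ) (ENNReal.ofReal p)))
    (hXinf : ¬ FiniteDimensional ℝ X)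
    (δ : ℝ) (hδ0 : 0 < δ) (hδ1 : δ < 1) :
    ∃ (nseq : ℕ → ℕ) (u : ℕ → lp (fun _ : ℕ => ℝ) (ENNReal.ofReal p)),
      nseq 0 = 0 ∧
      ∀ i : ℕ,
        u (i + 1) ∈ X ∧
        (∀ j < nseq i, (⇑(u (i + 1)) : ℕ → ℝ) j = 0) ∧
        -- (1)
        ‖u (i + 1)‖ = 1 ∧
        -- (2)
        2 * nseq i < nseq (i + 1) ∧
        -- (3)
        Function.support (Pproj (nseq (i + 1)) (⇑(u (i + 1)))) ⊆
          Set.Ico (nseq i) (nseq (i + 1)) ∧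
        -- (4)
        (∀ j : ℕ, |Pproj (nseq (i + 2)) (⇑(u (i + 2))) j| ≤
          min (minNonzeroOn (Pproj (nseq (i + 1)) (⇑(u (i + 1))))
                (Set.Ico (nseq i) (nseq (i + 1))))
              (1 / ((nseq (i + 1) : ℝ) - (nseq i : ℝ)) ^ (1 / p))) ∧
        -- (5)
        1 / ((nseq (i + 2) : ℝ) - (nseq (i + 1) : ℝ)) ^ (1 / p) ≤
          minNonzeroOn (Pproj (nseq (i + 1)) (⇑(u (i + 1))))
            (Set.Ico (nseq i) (nseq (i + 1))) ∧
        -- (6)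
        (1 - δ ≤ lpNorm p (Pproj (nseq (i + 1)) (⇑(u (i + 1)))) ∧
          lpNorm p (Pproj (nseq (i + 1)) (⇑(u (i + 1)))) ≤ 1) ∧
        -- (7)
        lpNorm p (Rproj (nseq (i + 1)) (⇑(u (i + 1)))) ≤ δ / 2 ^ (i + 1) := by
  have hp0 : 0 < p := zero_lt_one.trans hp
  have hp' : ENNReal.ofReal p ≠ ∞ := ENNReal.ofReal_ne_top
  obtain ⟨s₀, hs₀, -, -⟩ := exists_constructionStage (X := X) hp' hXinf hδ0 0 0 one_pos 0
  choose next hstart hflat hgap using fun k (s : ConstructionStage X δ k) =>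
    s.exists_next hp' hXinf hδ0 hδ1 (one_div_pos.mpr hp0)
  let s : ∀ k, ConstructionStage X δ k := fun k => Nat.rec s₀ next k
  have hs (i : ℕ) : (s (i + 1)).lower = (s i).upper := hstart i (s i)
  refine ⟨fun i => (s i).lower, fun k => (s k.pred).u, hs₀, fun i => ?_⟩
  simp only [Nat.pred_succ, hs, lpNorm_Pproj hp0, lpNorm_Rproj hp0]
  exact ⟨(s i).mem, (s i).apply_eq_zero, (s i).norm_eq_one, (s i).two_mul_lower_lt,
    (s i).support_Pproj_subset, fun j => (abs_Pproj_apply_le _ _ j).trans (hflat i (s i) j),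
    hgap i (s i), ⟨(s i).one_sub_le_norm_head, (s i).norm_head_le_one⟩, (s i).norm_tail_le⟩

/-- The inductive construction of the main theorem: in an infinite-dimensional
closed subspace `X ⊆ ℓ_p` there are indices `0 = n₀ < n₁ < ⋯` with
`2 n_{k-1} < n_k` and norm-one `u_k ∈ X` vanishing on the first `n_{k-1}`
coordinates such that, with `v_k = P_{n_k} u_k`, `w_k = R_{n_k} u_k`,
`I_k = {n_{k-1}+1, …, n_k}` (0-indexed: `[n_{k-1}, n_k)`) and
`b_k = min {|v_k(j)| : j ∈ I_k, v_k(j) ≠ 0}`, conditions (1)–(7) hold.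
Below `i + 1` plays the role of `k ≥ 1`. -/
theorem exists_main_inductive_construction (p : ℝ) (hp : 1 < p)
    [Fact (1 ≤ ENNReal.ofReal p)]
    (X : Submodule ℝ (lp (fun _ : ℕ => ℝ) (ENNReal.ofReal p)))
    (hXclosed : IsClosed (X : Set (lp (fun _ : ℕ => ℝ) (ENNReal.ofReal p))))
    (hXinf : ¬ FiniteDimensional ℝ X)
    (δ : ℝ) (hδ0 : 0 < δ) (hδ1 : δ < 1) :
    ∃ (nseq : ℕ → ℕ) (u : ℕ → lp (fun _ : ℕ => ℝ) (ENNReal.ofReal p)),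
      nseq 0 = 0 ∧
      ∀ i : ℕ,
        u (i + 1) ∈ X ∧
        (∀ j < nseq i, (⇑(u (i + 1)) : ℕ → ℝ) j = 0) ∧
        -- (1)
        ‖u (i + 1)‖ = 1 ∧
        -- (2)
        2 * nseq i < nseq (i + 1) ∧
        -- (3)
        Function.support (Pproj (nseq (i + 1)) (⇑(u (i + 1)))) ⊆
          Set.Ico (nseq i) (nseq (i + 1)) ∧
        -- (4)
        (∀ j : ℕ, |Pproj (nseq (i + 2)) (⇑(u (i + 2))) j| ≤
          min (minNonzeroOn (Pproj (nseq (i + 1)) (⇑(u (i + 1))))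
                (Set.Ico (nseq i) (nseq (i + 1))))
              (1 / ((nseq (i + 1) : ℝ) - (nseq i : ℝ)) ^ (1 / p))) ∧
        -- (5)
        1 / ((nseq (i + 2) : ℝ) - (nseq (i + 1) : ℝ)) ^ (1 / p) ≤
          minNonzeroOn (Pproj (nseq (i + 1)) (⇑(u (i + 1))))
            (Set.Ico (nseq i) (nseq (i + 1))) ∧
        -- (6)
        (1 - δ ≤ lpNorm p (Pproj (nseq (i + 1)) (⇑(u (i + 1)))) ∧
          lpNorm p (Pproj (nseq (i + 1)) (⇑(u (i + 1)))) ≤ 1) ∧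
        -- (7)
        lpNorm p (Rproj (nseq (i + 1)) (⇑(u (i + 1)))) ≤ δ / 2 ^ (i + 1) :=
  exists_main_inductive_construction_general p hp X hXinf δ hδ0 hδ1
end

section
/- Let 1 < p < ∞ and let 0 = n_0 < n_1 < n_2 < … be indices with n_k > 2n_{k−1} for every k ≥ 1, and set I_k := {n_{k−1}+1, …, n_k}. Let N ∈ ℕ, M > 0, and let z : ℕ → [0, ∞) be a sequence such that z(j) = 0 for j > n_N, such that Σ_{j ∈ I_k} z(j)^p ≤ M^p for each 1 ≤ k ≤ N, and such that z(j) ≤ z(i) whenever i ∈ I_k, j ∈ I_{k+1} and 1 ≤ k < N. Then ‖z‖_{p,∞} = sup_{j≥1} j^{1/p} z*(j) ≤ 4^{1/p} · M. -/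
open scoped ENNReal

/-- The (0-indexed) non-increasing rearrangement of a sequence. -/
noncomputable def rearrangement (f : ℕ → ℝ) (k : ℕ) : ℝ :=
  sInf {lam : ℝ | 0 ≤ lam ∧ {i : ℕ | lam < |f i|}.Finite ∧ {i : ℕ | lam < |f i|}.ncard ≤ k}

/-- The weak Lebesgue (Marcinkiewicz) quasinorm
`‖f‖_{p,∞} = sup_{j ≥ 1} j^{1/p} f*(j)`. -/
noncomputable def weakNorm (p : ℝ) (f : ℕ → ℝ) : ℝ :=
  ⨆ k : ℕ, ((k : ℝ) + 1) ^ (1 / p) * rearrangement f k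

/-!
Fix `λ > 0` and let the largest index with `z j > λ` lie in the block `I_m`. By Chebyshev's
inequality, `I_m` contains at most `M^p / λ^p` such indices. Block monotonicity puts all of
`I_{m-1}` above `λ`, so `|I_{m-1}| ≤ M^p / λ^p`, and by lacunarity the `n_{m-1}` indices
preceding `I_m` number at most `2 |I_{m-1}|`. Hence `#{z > λ} ≤ 3 M^p / λ^p < 4 M^p / λ^p`,
which is the weak-type bound `‖z‖_{p,∞} ≤ (4 M^p)^{1/p}`.
-/

open Finset

lemma rearrangement_le {f : ℕ → ℝ} {lam : ℝ} {k : ℕ} (hlam : 0 ≤ lam)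
    (hfin : {i | lam < |f i|}.Finite) (hcard : {i | lam < |f i|}.ncard ≤ k) :
    rearrangement f k ≤ lam :=
  csInf_le ⟨0, fun _ h => h.1⟩ ⟨hlam, hfin, hcard⟩

lemma weakNorm_le_of_ncard_mul_rpow_lt {p A : ℝ} (hp : 0 < p) (hA : 0 < A) {f : ℕ → ℝ}
    (h : ∀ lam > 0, {i | lam < |f i|}.Finite ∧ {i | lam < |f i|}.ncard * lam ^ p < A) :
    weakNorm p f ≤ A ^ (1 / p) := by
  refine Real.iSup_le (fun k => ?_) (by positivity)
  have hk : (0 : ℝ) < k + 1 := by positivity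
  set lam := (A / (k + 1)) ^ (1 / p)
  have hlam : 0 < lam := by positivity
  have hlamp : lam ^ p = A / (k + 1) := by
    rw [← Real.rpow_mul (by positivity), one_div_mul_cancel hp.ne', Real.rpow_one]
  obtain ⟨hfin, hcount⟩ := h lam hlam
  have hcard : {i | lam < |f i|}.ncard < k + 1 := by
    rw [hlamp, mul_div_assoc', div_lt_iff₀ hk, mul_comm A, mul_lt_mul_iff_left₀ hA] at hcount
    exact_mod_cast hcount
  calc ((k : ℝ) + 1) ^ (1 / p) * rearrangement f k
      ≤ ((k : ℝ) + 1) ^ (1 / p) * lam := by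
        gcongr
        exact rearrangement_le hlam.le hfin (Nat.lt_succ_iff.mp hcard)
    _ = A ^ (1 / p) := by
        rw [← Real.mul_rpow hk.le (by positivity), mul_div_cancel₀ _ hk.ne']

lemma card_filter_lt_mul_rpow_le_sum {ι : Type*} (s : Finset ι) {z : ι → ℝ}
    (hz : ∀ j ∈ s, 0 ≤ z j) {p lam : ℝ} (hp : 0 ≤ p) (hlam : 0 ≤ lam) :
    #{j ∈ s | lam < z j} * lam ^ p ≤ ∑ j ∈ s, z j ^ p := by
  calc #{j ∈ s | lam < z j} * lam ^ p ≤ ∑ j ∈ s with lam < z j, z j ^ p := by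
        rw [← nsmul_eq_mul]
        exact card_nsmul_le_sum _ _ _ fun j hj =>
          Real.rpow_le_rpow hlam (mem_filter.mp hj).2.le hp
    _ ≤ ∑ j ∈ s, z j ^ p :=
        sum_le_sum_of_subset_of_nonneg (filter_subset _ _) fun j hj _ =>
          Real.rpow_nonneg (hz j hj) p

section Lacunary

variable {n : ℕ → ℕ}

lemma exists_mem_Ico_of_lt (h0 : n 0 = 0) {N j : ℕ} (hj : j < n N) :
    ∃ i < N, j ∈ Ico (n i) (n (i + 1)) := by
  induction N with
  | zero => simp [h0] at hj
  | succ N ih =>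
    by_cases h : j < n N
    · obtain ⟨i, hi, hji⟩ := ih h
      exact ⟨i, by omega, hji⟩
    · exact ⟨N, N.lt_succ_self, mem_Ico.mpr ⟨not_lt.mp h, hj⟩⟩

-- Lacunarity makes `n (i + 1)` at most twice the length of the block `[n i, n (i + 1))`.
lemma cast_mul_rpow_le_of_forall_mem_Ico_lt (hlac : ∀ i, 2 * n i < n (i + 1))
    {z : ℕ → ℝ} (hz : ∀ j, 0 ≤ z j) {p lam B : ℝ} (hp : 0 ≤ p) (hlam : 0 ≤ lam) {i : ℕ}
    (hB : ∑ j ∈ Ico (n i) (n (i + 1)), z j ^ p ≤ B)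
    (hi : ∀ j ∈ Ico (n i) (n (i + 1)), lam < z j) :
    n (i + 1) * lam ^ p ≤ 2 * B := by
  have hcount := card_filter_lt_mul_rpow_le_sum (Ico (n i) (n (i + 1))) (fun j _ => hz j) hp hlam
  rw [filter_true_of_mem hi, Nat.card_Ico] at hcount
  have hlen : (n (i + 1) : ℝ) ≤ 2 * ((n (i + 1) - n i : ℕ) : ℝ) := by
    have := hlac i
    exact_mod_cast (by omega : n (i + 1) ≤ 2 * (n (i + 1) - n i))
  calc n (i + 1) * lam ^ p ≤ 2 * ((n (i + 1) - n i : ℕ) * lam ^ p) := by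
        rw [← mul_assoc]; gcongr
    _ ≤ 2 * B := by linarith

lemma card_filter_range_lt_mul_rpow_le (h0 : n 0 = 0) (hlac : ∀ i, 2 * n i < n (i + 1))
    {N : ℕ} {z : ℕ → ℝ} (hz : ∀ j, 0 ≤ z j) {p lam B : ℝ} (hp : 0 ≤ p) (hlam : 0 ≤ lam)
    (hB : 0 ≤ B) (hblock : ∀ i < N, ∑ j ∈ Ico (n i) (n (i + 1)), z j ^ p ≤ B)
    (hmono : ∀ i, i + 2 ≤ N → ∀ a ∈ Ico (n i) (n (i + 1)),
      ∀ b ∈ Ico (n (i + 1)) (n (i + 2)), z b ≤ z a) :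
    #{j ∈ range (n N) | lam < z j} * lam ^ p ≤ 3 * B := by
  set S := {j ∈ range (n N) | lam < z j}
  rcases S.eq_empty_or_nonempty with hS | hS
  · rw [hS, card_empty, Nat.cast_zero, zero_mul]
    positivity
  set top := S.max' hS
  have htop : top < n N ∧ lam < z top := by
    simpa only [S, mem_filter, mem_range] using S.max'_mem hS
  obtain ⟨m, hm, htop_mem⟩ := exists_mem_Ico_of_lt h0 htop.1
  have hsub : S ⊆ range (n m) ∪ {j ∈ Ico (n m) (n (m + 1)) | lam < z j} := by
    intro j hj
    have hj_le : j ≤ top := S.le_max' j hj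
    have hj_lt : lam < z j := (mem_filter.mp hj).2
    rw [mem_Ico] at htop_mem
    rw [mem_union, mem_range, mem_filter, mem_Ico]
    by_cases h : j < n m
    · exact Or.inl h
    · exact Or.inr ⟨⟨not_lt.mp h, by omega⟩, hj_lt⟩
  -- The block before the one containing `top` lies entirely above `z top > lam`.
  have hbelow : n m * lam ^ p ≤ 2 * B := by
    cases m with
    | zero => rw [h0, Nat.cast_zero, zero_mul]; positivity
    | succ i =>
      refine cast_mul_rpow_le_of_forall_mem_Ico_lt hlac hz hp hlam (hblock i (by omega))
        fun a ha => htop.2.trans_le (hmono i (by omega) a ha top htop_mem)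
  have htop_block := (card_filter_lt_mul_rpow_le_sum _ (fun j _ => hz j) hp hlam).trans
    (hblock m hm)
  calc (#S : ℝ) * lam ^ p
      ≤ ((n m + #{j ∈ Ico (n m) (n (m + 1)) | lam < z j} : ℕ) : ℝ) * lam ^ p := by
        gcongr
        exact (card_le_card hsub).trans ((card_union_le _ _).trans_eq (by rw [card_range]))
    _ = n m * lam ^ p + #{j ∈ Ico (n m) (n (m + 1)) | lam < z j} * lam ^ p := by
        push_cast; ring
    _ ≤ 3 * B := by linarith

end Lacunary

/-- A nonnegative sequence supported on the first `N` blocks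
`I_k = {n_{k-1}+1, …, n_k}` (0-indexed: `[n_{k-1}, n_k)`) of a lacunary partition
(`n_k > 2 n_{k-1}`), with block-wise `ℓ_p`-sums at most `M^p` and non-increasing
from each block to the next, has weak `ℓ_{p,∞}` quasinorm at most `4^{1/p} M`. -/
theorem weakNorm_blockwise_bound (p : ℝ) (hp : 1 < p)
    (nseq : ℕ → ℕ) (h0 : nseq 0 = 0)
    (hlac : ∀ i : ℕ, 2 * nseq i < nseq (i + 1))
    (N : ℕ) (M : ℝ) (hM : 0 < M)
    (z : ℕ → ℝ) (hznonneg : ∀ j, 0 ≤ z j)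
    (hzsupp : ∀ j : ℕ, nseq N ≤ j → z j = 0)
    (hblock : ∀ i < N, ∑ j ∈ Finset.Ico (nseq i) (nseq (i + 1)), z j ^ p ≤ M ^ p)
    (hmono : ∀ i : ℕ, i + 2 ≤ N →
      ∀ a ∈ Finset.Ico (nseq i) (nseq (i + 1)),
        ∀ b ∈ Finset.Ico (nseq (i + 1)) (nseq (i + 2)), z b ≤ z a) :
    weakNorm p z ≤ 4 ^ (1 / p) * M := by
  have hp0 : 0 < p := zero_lt_one.trans hp
  have hMp : 0 < M ^ p := Real.rpow_pos_of_pos hM p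
  have hlevel : ∀ lam > 0, {j | lam < |z j|} = ↑{j ∈ range (nseq N) | lam < z j} := by
    intro lam hlam
    ext j
    simp only [Set.mem_ofPred_eq, coe_filter, mem_range, abs_of_nonneg (hznonneg j)]
    refine ⟨fun hj => ⟨not_le.mp fun hNj => ?_, hj⟩, And.right⟩
    rw [hzsupp j hNj] at hj
    exact hlam.not_gt hj
  calc weakNorm p z ≤ (4 * M ^ p) ^ (1 / p) := by
        refine weakNorm_le_of_ncard_mul_rpow_lt hp0 (by positivity) fun lam hlam => ?_
        rw [hlevel lam hlam, Set.ncard_coe_finset]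
        refine ⟨finite_toSet _, ?_⟩
        have := card_filter_range_lt_mul_rpow_le h0 hlac hznonneg hp0.le hlam.le hMp.le hblock hmono
        linarith
    _ = 4 ^ (1 / p) * M := by
        rw [Real.mul_rpow (by norm_num) hMp.le, one_div, Real.rpow_rpow_inv hM.le hp0.ne']
end
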